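/- Let G be a group with elements g₂,…,g₅ and integers t₂₃₄, t₂₃₅, t₂₄₅, t₃₄₅ satisfying the listed commutator relations. Then for all integers a₂,…,a₅,b₂,…,b₅: (g₂^{a₂}g₃^{a₃}g₄^{a₄}g₅^{a₅})·(g₂^{b₂}g₃^{b₃}g₄^{b₄}g₅^{b₅}) = g₂^{f₂}g₃^{f₃}g₄^{f₄}g₅^{f₅}, where f₂ = a₂+b₂, f₃ = a₃+b₃, f₄ = a₄+b₄+a₃b₂t₂₃₄, and f₅ = a₅+b₅+a₃b₂t₂₃₅+a₄b₂t₂₄₅+a₄b₃t₃₄₅+a₃s₂(b₂)t₂₃₄t₂₄₅+s₂(a₃)b₂t₂₃₄t₃₄₅+a₃b₂b₃t₂₃₄t₃₄₅. -/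

import Mathlib

/-!
Conjugation by `g₂` fixes `g₅` and sends `g₄ ↦ g₄ g₅^t₂₄₅`, `g₃ ↦ g₃ c` with
`c = g₄^t₂₃₄ g₅^t₂₃₅`, and `c ↦ c g₅^(t₂₃₄ t₂₄₅)`. Iterating,
`g₂⁻ⁿ g₃ g₂ⁿ = g₃ cⁿ g₅^(s₂(n) t₂₃₄ t₂₄₅)`. Since `⟨g₃, g₄, g₅⟩` has class two, the `m`-th power
of this element follows from `(xy)^m = x^m y^m [y, x]^s₂(m)`, which gives the rule for moving
`g₂ⁿ` past `g₃^m`. With the class-two rules for moving `g₂ⁿ` and `g₃ⁿ` past `g₄^m`, the factors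
of the second word are then collected one at a time into the first.
-/
/-- `s₂(x) = x(x-1)/2` -/
def s2 (x : ℤ) : ℤ := x * (x - 1) / 2

theorem s2_add_one (n : ℤ) : s2 (n + 1) = s2 n + n := by
  unfold s2
  have h : (n + 1) * (n + 1 - 1) = n * (n - 1) + 2 * n := by ring
  omega

section
variable {G : Type*} [Group G]

theorem Int.eq_of_eq_zero_of_succ_eq_mul {X Y : ℤ → G} (w : ℤ → G) (h0 : X 0 = Y 0)
    (hX : ∀ n, X (n + 1) = X n * w n) (hY : ∀ n, Y (n + 1) = Y n * w n) (n : ℤ) :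
    X n = Y n := by
  induction n using Int.induction_on with
  | zero => exact h0
  | succ k ih => rw [hX, hY, ih]
  | pred k ih =>
    have hX' := hX (-k - 1)
    have hY' := hY (-k - 1)
    rw [sub_add_cancel] at hX' hY'
    exact mul_right_cancel (hX'.symm.trans (ih.trans hY'))

theorem commute_of_inv_mul_inv_mul_mul_eq_one {a b : G} (h : a⁻¹ * b⁻¹ * a * b = 1) :
    Commute a b :=
  Commute.inv_inv_iff.mp <| commutatorElement_eq_one_iff_commute.mp <| by
    simpa [commutatorElement_def] using h

theorem inv_mul_mul_eq_mul_of_inv_mul_inv_mul_mul_eq {a b c : G} (h : a⁻¹ * b⁻¹ * a * b = c) :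
    b⁻¹ * a * b = a * c := by
  rw [← h]; group

theorem inv_mul_zpow_mul (a b : G) (n : ℤ) : (b⁻¹ * a * b) ^ n = b⁻¹ * a ^ n * b := by
  simpa using conj_zpow (a := b⁻¹) (b := a) (i := n)

theorem zpow_neg_mul_mul_zpow_succ (a b : G) (n : ℤ) :
    b ^ (-(n + 1)) * a * b ^ (n + 1) = b ^ (-n) * (b⁻¹ * a * b) * b ^ n := by
  group

variable {a b c z : G}

theorem inv_mul_zpow_mul_of_inv_mul_mul_eq (hab : b⁻¹ * a * b = a * z) (hza : Commute z a)
    (k : ℤ) : b⁻¹ * a ^ k * b = a ^ k * z ^ k := by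
  rw [← inv_mul_zpow_mul, hab, hza.symm.mul_zpow]

theorem zpow_neg_mul_mul_zpow_eq_mul_zpow (hab : b⁻¹ * a * b = a * z) (hzb : Commute z b)
    (n : ℤ) : b ^ (-n) * a * b ^ n = a * z ^ n := by
  refine Int.eq_of_eq_zero_of_succ_eq_mul (X := fun n => b ^ (-n) * a * b ^ n)
    (Y := fun n => a * z ^ n) (fun _ => z) (by simp) (fun n => ?_) (fun n => ?_) n
  · rw [zpow_neg_mul_mul_zpow_succ, hab]; simp only [mul_assoc, (hzb.zpow_right n).eq]
  · rw [zpow_add_one, mul_assoc]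

theorem zpow_neg_mul_zpow_mul_zpow (a b : G) (m n : ℤ) :
    b ^ (-n) * a ^ m * b ^ n = (b ^ (-n) * a * b ^ n) ^ m := by
  simpa [zpow_neg] using (conj_zpow (a := b ^ (-n)) (b := a) (i := m)).symm

theorem zpow_mul_zpow_of_inv_mul_mul_eq (hab : b⁻¹ * a * b = a * z) (hza : Commute z a)
    (hzb : Commute z b) (m n : ℤ) : a ^ m * b ^ n = b ^ n * a ^ m * z ^ (m * n) :=
  calc a ^ m * b ^ n = b ^ n * (b ^ (-n) * a ^ m * b ^ n) := by group
    _ = b ^ n * (a * z ^ n) ^ m := by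
      rw [zpow_neg_mul_zpow_mul_zpow, zpow_neg_mul_mul_zpow_eq_mul_zpow hab hzb]
    _ = b ^ n * a ^ m * z ^ (m * n) := by
      rw [(hza.zpow_left n).symm.mul_zpow, mul_assoc, ← zpow_mul, mul_comm n]

theorem mul_zpow_of_inv_mul_mul_eq {x y w : G} (hyx : x⁻¹ * y * x = y * w) (hwx : Commute w x)
    (hwy : Commute w y) (m : ℤ) : (x * y) ^ m = x ^ m * y ^ m * w ^ s2 m := by
  refine Int.eq_of_eq_zero_of_succ_eq_mul (X := fun m => (x * y) ^ m)
    (Y := fun m => x ^ m * y ^ m * w ^ s2 m) (fun _ => x * y) (by simp [s2]) (fun m => ?_)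
    (fun m => ?_) m
  · exact zpow_add_one _ _
  · have hyx_pow := zpow_mul_zpow_of_inv_mul_mul_eq hyx hwy hwx m 1
    simp only [zpow_one, mul_one] at hyx_pow
    calc x ^ (m + 1) * y ^ (m + 1) * w ^ s2 (m + 1)
        = x ^ m * x * y ^ m * w ^ m * y * w ^ s2 m := by
          rw [(hwy.zpow_left m).right_comm, s2_add_one]; group
      _ = x ^ m * (y ^ m * x) * y * w ^ s2 m := by rw [hyx_pow]; simp only [mul_assoc]
      _ = x ^ m * y ^ m * w ^ s2 m * (x * y) := by
          rw [((hwx.mul_right hwy).zpow_left _).right_comm]; group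

theorem zpow_neg_mul_mul_zpow_eq_mul_zpow_mul_zpow_s2 (hab : b⁻¹ * a * b = a * c)
    (hcb : b⁻¹ * c * b = c * z) (hzb : Commute z b) (hzc : Commute z c) (n : ℤ) :
    b ^ (-n) * a * b ^ n = a * c ^ n * z ^ s2 n := by
  refine Int.eq_of_eq_zero_of_succ_eq_mul (X := fun n => b ^ (-n) * a * b ^ n)
    (Y := fun n => a * c ^ n * z ^ s2 n) (fun n => c * z ^ n) (by simp [s2]) (fun n => ?_)
    (fun n => ?_) n
  · calc b ^ (-(n + 1)) * a * b ^ (n + 1) = b ^ (-n) * (a * c) * b ^ n := by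
          rw [zpow_neg_mul_mul_zpow_succ, hab]
      _ = b ^ (-n) * a * b ^ n * (b ^ (-n) * c * b ^ n) := by group
      _ = b ^ (-n) * a * b ^ n * (c * z ^ n) := by
          rw [zpow_neg_mul_mul_zpow_eq_mul_zpow hcb hzb]
  · simp only [← mul_assoc]
    rw [(hzc.zpow_left _).right_comm, s2_add_one]; group

end

section G2

variable {G : Type*} [Group G] {g2 g3 g4 g5 : G} {t234 t235 t245 t345 : ℤ}

theorem zpow_neg_mul_g3_mul_zpow (h32 : g2⁻¹ * g3 * g2 = g3 * (g4 ^ t234 * g5 ^ t235))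
    (h42 : g2⁻¹ * g4 * g2 = g4 * g5 ^ t245) (c52 : Commute g5 g2) (c54 : Commute g5 g4)
    (n : ℤ) : g2 ^ (-n) * g3 * g2 ^ n =
      g3 * (g4 ^ (n * t234) * g5 ^ (n * t235 + s2 n * (t234 * t245))) := by
  have hcb :
      g2⁻¹ * (g4 ^ t234 * g5 ^ t235) * g2 = g4 ^ t234 * g5 ^ t235 * g5 ^ (t234 * t245) :=
    calc g2⁻¹ * (g4 ^ t234 * g5 ^ t235) * g2
        = (g2⁻¹ * g4 ^ t234 * g2) * (g2⁻¹ * g5 ^ t235 * g2) := by group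
      _ = g4 ^ t234 * (g5 ^ t245) ^ t234 * g5 ^ t235 := by
          rw [inv_mul_zpow_mul_of_inv_mul_mul_eq h42 (c54.zpow_left t245), mul_assoc g2⁻¹,
            (c52.zpow_left t235).eq, inv_mul_cancel_left]
      _ = g4 ^ t234 * g5 ^ t235 * g5 ^ (t234 * t245) := by group
  rw [zpow_neg_mul_mul_zpow_eq_mul_zpow_mul_zpow_s2 h32 hcb (c52.zpow_left _)
    ((c54.zpow_zpow _ _).mul_right (Commute.zpow_zpow_self g5 _ _)),
    (c54.zpow_zpow _ _).symm.mul_zpow]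
  group

theorem g3_zpow_mul_g2_zpow (h32 : g2⁻¹ * g3 * g2 = g3 * (g4 ^ t234 * g5 ^ t235))
    (h42 : g2⁻¹ * g4 * g2 = g4 * g5 ^ t245) (h43 : g3⁻¹ * g4 * g3 = g4 * g5 ^ t345)
    (c52 : Commute g5 g2) (c53 : Commute g5 g3) (c54 : Commute g5 g4) (m n : ℤ) :
    g3 ^ m * g2 ^ n = g2 ^ n * g3 ^ m * g4 ^ (m * n * t234) *
      g5 ^ (m * n * t235 + m * s2 n * t234 * t245 + s2 m * n * t234 * t345) := by
  set A := n * t234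
  set B := n * t235 + s2 n * (t234 * t245)
  have hyx : g3⁻¹ * (g4 ^ A * g5 ^ B) * g3 = g4 ^ A * g5 ^ B * g5 ^ (A * t345) := by
    calc g3⁻¹ * (g4 ^ A * g5 ^ B) * g3
        = (g3⁻¹ * g4 ^ A * g3) * (g3⁻¹ * g5 ^ B * g3) := by group
      _ = g4 ^ A * (g5 ^ t345) ^ A * g5 ^ B := by
          rw [inv_mul_zpow_mul_of_inv_mul_mul_eq h43 (c54.zpow_left t345), mul_assoc g3⁻¹,
            (c53.zpow_left B).eq, inv_mul_cancel_left]
      _ = g4 ^ A * g5 ^ B * g5 ^ (A * t345) := by group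
  calc g3 ^ m * g2 ^ n = g2 ^ n * (g2 ^ (-n) * g3 ^ m * g2 ^ n) := by group
    _ = g2 ^ n * (g3 * (g4 ^ A * g5 ^ B)) ^ m := by
      rw [zpow_neg_mul_zpow_mul_zpow, zpow_neg_mul_g3_mul_zpow h32 h42 c52 c54]
    _ = g2 ^ n * (g3 ^ m * (g4 ^ A * g5 ^ B) ^ m * (g5 ^ (A * t345)) ^ s2 m) := by
      rw [mul_zpow_of_inv_mul_mul_eq hyx (c53.zpow_left _)
        ((c54.zpow_zpow _ _).mul_right (Commute.zpow_zpow_self g5 _ _))]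
    _ = _ := by
      rw [(c54.zpow_zpow _ _).symm.mul_zpow]
      simp only [A, B]
      group

theorem collected_mul_g2_zpow (h32 : g2⁻¹ * g3 * g2 = g3 * (g4 ^ t234 * g5 ^ t235))
    (h42 : g2⁻¹ * g4 * g2 = g4 * g5 ^ t245) (h43 : g3⁻¹ * g4 * g3 = g4 * g5 ^ t345)
    (c52 : Commute g5 g2) (c53 : Commute g5 g3) (c54 : Commute g5 g4) (a2 a3 a4 a5 k : ℤ) :
    g2 ^ a2 * g3 ^ a3 * g4 ^ a4 * g5 ^ a5 * g2 ^ k =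
      g2 ^ (a2 + k) * g3 ^ a3 * g4 ^ (a4 + a3 * k * t234) *
        g5 ^ (a5 + a4 * k * t245 + a3 * k * t235 + a3 * s2 k * t234 * t245 +
          s2 a3 * k * t234 * t345) :=
  calc g2 ^ a2 * g3 ^ a3 * g4 ^ a4 * g5 ^ a5 * g2 ^ k
      = g2 ^ a2 * g3 ^ a3 * (g4 ^ a4 * g2 ^ k) * g5 ^ a5 := by
        rw [(c52.zpow_zpow _ _).right_comm]; group
    _ = g2 ^ a2 * (g3 ^ a3 * g2 ^ k) * g4 ^ a4 * (g5 ^ t245) ^ (a4 * k) * g5 ^ a5 := by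
        rw [zpow_mul_zpow_of_inv_mul_mul_eq h42 (c54.zpow_left _) (c52.zpow_left _)]; group
    _ = g2 ^ a2 * (g2 ^ k * g3 ^ a3 * g4 ^ (a3 * k * t234) *
          g5 ^ (a3 * k * t235 + a3 * s2 k * t234 * t245 + s2 a3 * k * t234 * t345)) *
          g4 ^ a4 * (g5 ^ t245) ^ (a4 * k) * g5 ^ a5 := by
        rw [g3_zpow_mul_g2_zpow h32 h42 h43 c52 c53 c54]
    _ = _ := by
        simp only [← mul_assoc]; rw [(c54.zpow_zpow _ _).right_comm]; group

theorem collected_mul_g3_zpow (h43 : g3⁻¹ * g4 * g3 = g4 * g5 ^ t345) (c53 : Commute g5 g3)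
    (c54 : Commute g5 g4) (a2 a3 a4 a5 k : ℤ) :
    g2 ^ a2 * g3 ^ a3 * g4 ^ a4 * g5 ^ a5 * g3 ^ k =
      g2 ^ a2 * g3 ^ (a3 + k) * g4 ^ a4 * g5 ^ (a5 + a4 * k * t345) :=
  calc g2 ^ a2 * g3 ^ a3 * g4 ^ a4 * g5 ^ a5 * g3 ^ k
      = g2 ^ a2 * g3 ^ a3 * (g4 ^ a4 * g3 ^ k) * g5 ^ a5 := by
        rw [(c53.zpow_zpow _ _).right_comm]; group
    _ = _ := by
        rw [zpow_mul_zpow_of_inv_mul_mul_eq h43 (c54.zpow_left _) (c53.zpow_left _)]; group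

theorem collected_mul_g4_zpow (c54 : Commute g5 g4) (a2 a3 a4 a5 k : ℤ) :
    g2 ^ a2 * g3 ^ a3 * g4 ^ a4 * g5 ^ a5 * g4 ^ k =
      g2 ^ a2 * g3 ^ a3 * g4 ^ (a4 + k) * g5 ^ a5 := by
  rw [(c54.zpow_zpow _ _).right_comm]; group

theorem collected_mul_g5_zpow (a2 a3 a4 a5 k : ℤ) :
    g2 ^ a2 * g3 ^ a3 * g4 ^ a4 * g5 ^ a5 * g5 ^ k =
      g2 ^ a2 * g3 ^ a3 * g4 ^ a4 * g5 ^ (a5 + k) := by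
  group

end G2

/-- Multiplication polynomials `f₂,…,f₅` for the subgroup `G₂ = ⟨g₂,…,g₅⟩`. -/
theorem multiplication_polynomials_G2 (G : Type*) [Group G] (g2 g3 g4 g5 : G)
    (t234 t235 t245 t345 : ℤ)
    (h32 : g3⁻¹ * g2⁻¹ * g3 * g2 = g4 ^ t234 * g5 ^ t235)
    (h42 : g4⁻¹ * g2⁻¹ * g4 * g2 = g5 ^ t245)
    (h43 : g4⁻¹ * g3⁻¹ * g4 * g3 = g5 ^ t345)
    (h52 : g5⁻¹ * g2⁻¹ * g5 * g2 = 1)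
    (h53 : g5⁻¹ * g3⁻¹ * g5 * g3 = 1)
    (h54 : g5⁻¹ * g4⁻¹ * g5 * g4 = 1) :
    ∀ a2 a3 a4 a5 b2 b3 b4 b5 : ℤ,
      (g2 ^ a2 * g3 ^ a3 * g4 ^ a4 * g5 ^ a5) * (g2 ^ b2 * g3 ^ b3 * g4 ^ b4 * g5 ^ b5)
        = g2 ^ (a2 + b2) * g3 ^ (a3 + b3) * g4 ^ (a4 + b4 + a3 * b2 * t234)
            * g5 ^ (a5 + b5 + a3 * b2 * t235 + a4 * b2 * t245 + a4 * b3 * t345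
                    + a3 * s2 b2 * t234 * t245 + s2 a3 * b2 * t234 * t345
                    + a3 * b2 * b3 * t234 * t345) := by
  intro a2 a3 a4 a5 b2 b3 b4 b5
  have c52 := commute_of_inv_mul_inv_mul_mul_eq_one h52
  have c53 := commute_of_inv_mul_inv_mul_mul_eq_one h53
  have c54 := commute_of_inv_mul_inv_mul_mul_eq_one h54
  simp only [← mul_assoc]
  rw [collected_mul_g2_zpow (inv_mul_mul_eq_mul_of_inv_mul_inv_mul_mul_eq h32)
      (inv_mul_mul_eq_mul_of_inv_mul_inv_mul_mul_eq h42)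
      (inv_mul_mul_eq_mul_of_inv_mul_inv_mul_mul_eq h43) c52 c53 c54,
    collected_mul_g3_zpow (inv_mul_mul_eq_mul_of_inv_mul_inv_mul_mul_eq h43) c53 c54,
    collected_mul_g4_zpow c54, collected_mul_g5_zpow]
  group
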